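/- Every semi-lightlike curve in 𝕃³ is planar and contained in a lightlike plane: if I ⊆ ℝ is an open interval and α : I → ℝ³ is a smooth curve with ⟨α'(s), α'(s)⟩_L = 1, α''(s) ≠ 0 and ⟨α''(s), α''(s)⟩_L = 0 for all s ∈ I, then there exist p ∈ ℝ³ and a nonzero vector v ∈ ℝ³ with ⟨v, v⟩_L = 0 such that ⟨α(s) − p, v⟩_L = 0 for all s ∈ I. -/

import Mathlib

/-- The Lorentzian scalar product on `𝕃³`: `⟨x,y⟩_L = x₁y₁ + x₂y₂ − x₃y₃`. -/
def lorInner3 (x y : Fin 3 → ℝ) : ℝ := x 0 * y 0 + x 1 * y 1 - x 2 * y 2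

lemma lor_algebra (t1 t2 t3 n1 n2 n3 w1 w2 w3 : ℝ)
    (h1 : t1*n1 + t2*n2 - t3*n3 = 0)
    (h2 : n1*n1 + n2*n2 - n3*n3 = 0)
    (h3 : t1*w1 + t2*w2 - t3*w3 = 0)
    (h4 : n1*w1 + n2*w2 - n3*w3 = 0)
    (h5 : t1*t1 + t2*t2 - t3*t3 = 1)
    (hn3 : n3 ≠ 0) :
    w1*n3 = w3*n1 ∧ w2*n3 = w3*n2 := by
  have hD : (t1*n2 - t2*n1)^2 = n3^2 := by
    linear_combination (t1*t1+t2*t2)*h2 + n3^2*h5 - (t1*n1+t2*n2+t3*n3)*h1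
  have hDne : t1*n2 - t2*n1 ≠ 0 := by
    intro h
    apply hn3
    have : n3^2 = 0 := by rw [← hD, h]; ring
    exact pow_eq_zero_iff (by norm_num) |>.1 this
  constructor
  · have key : (t1*n2 - t2*n1) * (w1*n3 - w3*n1) = 0 := by
      linear_combination (-(w3*n2))*h1 + (w3*t2)*h2 + (n3*n2)*h3 - (n3*t2)*h4
    rcases mul_eq_zero.1 key with h | h
    · exact absurd h hDne
    · linarith
  · have key : (t1*n2 - t2*n1) * (w2*n3 - w3*n2) = 0 := by
      linear_combination (w3*n1)*h1 - (w3*t1)*h2 - (n3*n1)*h3 + (n3*t1)*h4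
    rcases mul_eq_zero.1 key with h | h
    · exact absurd h hDne
    · linarith

lemma lor_symm (x y : Fin 3 → ℝ) : lorInner3 x y = lorInner3 y x := by
  simp only [lorInner3]; ring

lemma lor_hasDerivAt {f g : ℝ → Fin 3 → ℝ} {f' g' : Fin 3 → ℝ} {s : ℝ}
    (hf : HasDerivAt f f' s) (hg : HasDerivAt g g' s) :
    HasDerivAt (fun t => lorInner3 (f t) (g t))
      (lorInner3 f' (g s) + lorInner3 (f s) g') s := by
  have hf0 := hasDerivAt_pi.1 hf 0
  have hf1 := hasDerivAt_pi.1 hf 1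
  have hf2 := hasDerivAt_pi.1 hf 2
  have hg0 := hasDerivAt_pi.1 hg 0
  have hg1 := hasDerivAt_pi.1 hg 1
  have hg2 := hasDerivAt_pi.1 hg 2
  have h := ((hf0.mul hg0).add (hf1.mul hg1)).sub (hf2.mul hg2)
  simp only [lorInner3]
  exact h.congr_deriv (by ring)

/-- constancy of a real function with zero derivative on an open interval -/
lemma const_of_hasDerivAt_zero {u : ℝ → ℝ} {a b : ℝ}
    (h : ∀ s ∈ Set.Ioo a b, HasDerivAt u 0 s) :
    ∀ x ∈ Set.Ioo a b, ∀ y ∈ Set.Ioo a b, u x = u y := by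
  have main : ∀ x ∈ Set.Ioo a b, ∀ y ∈ Set.Ioo a b, x ≤ y → u y = u x := by
    intro x hx y hy hxy
    have hsub : Set.Icc x y ⊆ Set.Ioo a b := Set.Icc_subset_Ioo hx.1 hy.2
    exact constant_of_has_deriv_right_zero
      (fun t ht => (h t (hsub ht)).continuousAt.continuousWithinAt)
      (fun t ht => (h t (hsub (Set.Ico_subset_Icc_self ht))).hasDerivWithinAt)
      y (Set.right_mem_Icc.2 hxy)
  intro x hx y hy
  rcases le_total x y with hxy | hxy
  · exact (main x hx y hy hxy).symm
  · exact main y hy x hx hxy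

/-- Every semi-lightlike curve in `𝕃³` (unit-speed spacelike, with nonvanishing lightlike
acceleration) is planar and contained in a lightlike plane. -/
theorem semiLightlike_curve_planar
    (a b : ℝ) (hab : a < b) (α : ℝ → (Fin 3 → ℝ))
    (hsmooth : ContDiffOn ℝ (⊤ : ℕ∞) α (Set.Ioo a b))
    (hunit : ∀ s ∈ Set.Ioo a b, lorInner3 (deriv α s) (deriv α s) = 1)
    (hbireg : ∀ s ∈ Set.Ioo a b, deriv (deriv α) s ≠ 0)
    (hdeg : ∀ s ∈ Set.Ioo a b, lorInner3 (deriv (deriv α) s) (deriv (deriv α) s) = 0) :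
    ∃ (p v : Fin 3 → ℝ), v ≠ 0 ∧ lorInner3 v v = 0 ∧
      ∀ s ∈ Set.Ioo a b, lorInner3 (α s - p) v = 0 := by
  have hIo : IsOpen (Set.Ioo a b) := isOpen_Ioo
  set I := Set.Ioo a b with hIdef
  set T := deriv α with hT
  set N := deriv T with hN
  set W := deriv N with hW
  have htop : ((⊤ : ℕ∞) : WithTop ℕ∞) + 1 ≤ ((⊤ : ℕ∞) : WithTop ℕ∞) := by
    rw [← WithTop.coe_one, ← WithTop.coe_add, top_add]
  have hTsm : ContDiffOn ℝ (⊤ : ℕ∞) T I := hsmooth.deriv_of_isOpen hIo htop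
  have hNsm : ContDiffOn ℝ (⊤ : ℕ∞) N I := hTsm.deriv_of_isOpen hIo htop
  have hWsm : ContDiffOn ℝ (⊤ : ℕ∞) W I := hNsm.deriv_of_isOpen hIo htop
  have hdα : ∀ s ∈ I, HasDerivAt α (T s) s := fun s hs =>
    ((hsmooth.differentiableOn (by simp)).differentiableAt (hIo.mem_nhds hs)).hasDerivAt
  have hdT : ∀ s ∈ I, HasDerivAt T (N s) s := fun s hs =>
    ((hTsm.differentiableOn (by simp)).differentiableAt (hIo.mem_nhds hs)).hasDerivAt
  have hdN : ∀ s ∈ I, HasDerivAt N (W s) s := fun s hs =>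
    ((hNsm.differentiableOn (by simp)).differentiableAt (hIo.mem_nhds hs)).hasDerivAt
  -- ⟨N, T⟩ = 0
  have hNT : ∀ s ∈ I, lorInner3 (N s) (T s) = 0 := by
    intro s hs
    have hder := lor_hasDerivAt (hdT s hs) (hdT s hs)
    have heq : (fun t => lorInner3 (T t) (T t)) =ᶠ[nhds s] fun _ => (1:ℝ) :=
      Filter.eventuallyEq_of_mem (hIo.mem_nhds hs) (fun t ht => hunit t ht)
    have hzero : HasDerivAt (fun t => lorInner3 (T t) (T t)) 0 s :=
      (hasDerivAt_const s (1:ℝ)).congr_of_eventuallyEq heq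
    have := hder.unique hzero
    rw [lor_symm (T s) (N s)] at this
    linarith
  -- ⟨W, N⟩ = 0
  have hWN : ∀ s ∈ I, lorInner3 (W s) (N s) = 0 := by
    intro s hs
    have hder := lor_hasDerivAt (hdN s hs) (hdN s hs)
    have heq : (fun t => lorInner3 (N t) (N t)) =ᶠ[nhds s] fun _ => (0:ℝ) :=
      Filter.eventuallyEq_of_mem (hIo.mem_nhds hs) (fun t ht => hdeg t ht)
    have hzero : HasDerivAt (fun t => lorInner3 (N t) (N t)) 0 s :=
      (hasDerivAt_const s (0:ℝ)).congr_of_eventuallyEq heq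
    have := hder.unique hzero
    rw [lor_symm (N s) (W s)] at this
    linarith
  -- ⟨W, T⟩ = 0
  have hWT : ∀ s ∈ I, lorInner3 (W s) (T s) = 0 := by
    intro s hs
    have hder := lor_hasDerivAt (hdN s hs) (hdT s hs)
    have heq : (fun t => lorInner3 (N t) (T t)) =ᶠ[nhds s] fun _ => (0:ℝ) :=
      Filter.eventuallyEq_of_mem (hIo.mem_nhds hs) (fun t ht => hNT t ht)
    have hzero : HasDerivAt (fun t => lorInner3 (N t) (T t)) 0 s :=
      (hasDerivAt_const s (0:ℝ)).congr_of_eventuallyEq heq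
    have := hder.unique hzero
    have h2 := hdeg s hs
    linarith
  -- third component of N is nonzero
  have hn3 : ∀ s ∈ I, N s 2 ≠ 0 := by
    intro s hs h
    apply hbireg s hs
    have h0 := hdeg s hs
    simp only [lorInner3] at h0
    rw [h] at h0
    have h1 : N s 0 = 0 := by nlinarith [sq_nonneg (N s 0), sq_nonneg (N s 1)]
    have h2 : N s 1 = 0 := by nlinarith [sq_nonneg (N s 0), sq_nonneg (N s 1)]
    funext i
    fin_cases i <;> simp [h1, h2, h]
  -- W is pointwise proportional to N
  have halg : ∀ s ∈ I, W s 0 * N s 2 = W s 2 * N s 0 ∧ W s 1 * N s 2 = W s 2 * N s 1 := by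
    intro s hs
    have e1 := hNT s hs; rw [lor_symm] at e1
    have e2 := hdeg s hs
    have e3 := hWT s hs; rw [lor_symm] at e3
    have e4 := hWN s hs; rw [lor_symm] at e4
    have e5 := hunit s hs
    simp only [lorInner3] at e1 e2 e3 e4 e5
    exact lor_algebra (T s 0) (T s 1) (T s 2) (N s 0) (N s 1) (N s 2)
      (W s 0) (W s 1) (W s 2) e1 e2 e3 e4 e5 (hn3 s hs)
  -- the fixed null vector
  set s₀ : ℝ := (a + b) / 2 with hs₀def
  have hs₀ : s₀ ∈ I := ⟨by simp only [hs₀def]; linarith, by simp only [hs₀def]; linarith⟩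
  set v : Fin 3 → ℝ := N s₀ with hv
  refine ⟨α s₀, v, hbireg s₀ hs₀, hdeg s₀ hs₀, ?_⟩
  -- g = ⟨N, v⟩
  set g : ℝ → ℝ := fun t => lorInner3 (N t) v with hg
  have hgder : ∀ s ∈ I, HasDerivAt g (lorInner3 (W s) v) s := by
    intro s hs
    have := lor_hasDerivAt (hdN s hs) (hasDerivAt_const s v)
    simpa [lorInner3, hg] using this
  have hgode : ∀ s ∈ I, lorInner3 (W s) v = (W s 2 / N s 2) * g s := by
    intro s hs
    obtain ⟨ha1, ha2⟩ := halg s hs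
    rw [div_mul_eq_mul_div, eq_div_iff (hn3 s hs)]
    simp only [hg, lorInner3]
    linear_combination v 0 * ha1 + v 1 * ha2
  -- continuity data
  have hNc : ContinuousOn N I := hNsm.continuousOn
  have hWc : ContinuousOn W I := hWsm.continuousOn
  have hlamc : ContinuousOn (fun t => W t 2 / N t 2) I :=
    (((continuous_apply (2 : Fin 3)).comp_continuousOn hWc).div
      ((continuous_apply (2 : Fin 3)).comp_continuousOn hNc) (fun t ht => hn3 t ht))
  have hgc : ContinuousOn g I := by
    intro t ht
    exact (hgder t ht).continuousAt.continuousWithinAt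
  have hgs₀ : g s₀ = 0 := hdeg s₀ hs₀
  -- g vanishes identically
  have hgzero : ∀ s ∈ I, g s = 0 := by
    intro s hs
    rcases le_total s₀ s with hcase | hcase
    · -- forward Gronwall on [s₀, s]
      have hsub : Set.Icc s₀ s ⊆ I := Set.Icc_subset_Ioo hs₀.1 hs.2
      obtain ⟨K, hK⟩ := (isCompact_Icc (a := s₀) (b := s)).exists_bound_of_continuousOn
        (hlamc.mono hsub)
      have key := norm_le_gronwallBound_of_norm_deriv_right_le
        (f := g) (f' := fun t => (W t 2 / N t 2) * g t) (δ := 0) (K := K) (ε := 0)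
        (a := s₀) (b := s)
        (hgc.mono hsub)
        (fun x hx => by
          have hxI : x ∈ I := hsub (Set.Ico_subset_Icc_self hx)
          have h := hgder x hxI
          rw [hgode x hxI] at h
          exact h.hasDerivWithinAt)
        (by simp [hgs₀])
        (fun x hx => by
          have hxJ : x ∈ Set.Icc s₀ s := Set.Ico_subset_Icc_self hx
          have hb := hK x hxJ
          rw [Real.norm_eq_abs] at hb ⊢
          rw [abs_mul]
          have : |W x 2 / N x 2| * |g x| ≤ K * |g x| :=
            mul_le_mul_of_nonneg_right hb (abs_nonneg _)
          simpa [Real.norm_eq_abs] using this)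
        s (Set.right_mem_Icc.2 hcase)
      rw [gronwallBound_ε0_δ0] at key
      exact norm_le_zero_iff.1 key
    · -- backward: reflect time
      have hsub : Set.Icc s s₀ ⊆ I := Set.Icc_subset_Ioo hs.1 hs₀.2
      obtain ⟨K, hK⟩ := (isCompact_Icc (a := s) (b := s₀)).exists_bound_of_continuousOn
        (hlamc.mono hsub)
      have hσ : ∀ t ∈ Set.Icc s s₀, s + s₀ - t ∈ Set.Icc s s₀ := by
        intro t ht
        exact ⟨by linarith [ht.2], by linarith [ht.1]⟩
      have hGder : ∀ t ∈ Set.Icc s s₀, HasDerivAt (fun t => g (s + s₀ - t))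
          (-((W (s + s₀ - t) 2 / N (s + s₀ - t) 2) * g (s + s₀ - t))) t := by
        intro t ht
        have hlin : HasDerivAt (fun t : ℝ => s + s₀ - t) (-1) t := by
          simpa using (hasDerivAt_id t).const_sub (s + s₀)
        have hσt : s + s₀ - t ∈ I := hsub (hσ t ht)
        have h := hgder (s + s₀ - t) hσt
        rw [hgode _ hσt] at h
        have := h.comp t hlin
        simpa [mul_comm, mul_neg, Function.comp_def] using this
      have key := norm_le_gronwallBound_of_norm_deriv_right_le
        (f := fun t => g (s + s₀ - t))
        (f' := fun t => -((W (s + s₀ - t) 2 / N (s + s₀ - t) 2) * g (s + s₀ - t)))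
        (δ := 0) (K := K) (ε := 0) (a := s) (b := s₀)
        (fun t ht => (hGder t ht).continuousAt.continuousWithinAt)
        (fun x hx => ((hGder x (Set.Ico_subset_Icc_self hx)).hasDerivWithinAt))
        (by simp [show s + s₀ - s = s₀ by ring, hgs₀])
        (fun x hx => by
          have hxJ : x ∈ Set.Icc s s₀ := Set.Ico_subset_Icc_self hx
          have hb := hK (s + s₀ - x) (hσ x hxJ)
          rw [Real.norm_eq_abs] at hb ⊢
          rw [abs_neg, abs_mul]
          have : |W (s + s₀ - x) 2 / N (s + s₀ - x) 2| * |g (s + s₀ - x)| ≤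
              K * |g (s + s₀ - x)| := mul_le_mul_of_nonneg_right hb (abs_nonneg _)
          simpa [Real.norm_eq_abs] using this)
        s₀ (Set.right_mem_Icc.2 hcase)
      rw [gronwallBound_ε0_δ0] at key
      have := norm_le_zero_iff.1 key
      simpa [show s + s₀ - s₀ = s by ring] using this
  -- ⟨T, v⟩ = 0 on I
  have hTv : ∀ s ∈ I, lorInner3 (T s) v = 0 := by
    have hder : ∀ s ∈ I, HasDerivAt (fun t => lorInner3 (T t) v) 0 s := by
      intro s hs
      have := lor_hasDerivAt (hdT s hs) (hasDerivAt_const s v)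
      have h2 : lorInner3 (N s) v + lorInner3 (T s) 0 = 0 := by
        have hz := hgzero s hs
        simp only [hg] at hz
        have h0 : lorInner3 (T s) 0 = 0 := by simp [lorInner3]
        rw [hz, h0, add_zero]
      rwa [h2] at this
    intro s hs
    have := const_of_hasDerivAt_zero hder s hs s₀ hs₀
    rw [this, lor_symm]
    exact hNT s₀ hs₀
  -- ⟨α, v⟩ constant on I
  have hαconst : ∀ s ∈ I, lorInner3 (α s) v = lorInner3 (α s₀) v := by
    have hder : ∀ s ∈ I, HasDerivAt (fun t => lorInner3 (α t) v) 0 s := by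
      intro s hs
      have := lor_hasDerivAt (hdα s hs) (hasDerivAt_const s v)
      have h2 : lorInner3 (T s) v + lorInner3 (α s) 0 = 0 := by
        simp [lorInner3] at *
        simpa [lorInner3] using hTv s hs
      rwa [h2] at this
    intro s hs
    exact const_of_hasDerivAt_zero hder s hs s₀ hs₀
  intro s hs
  have hsplit : lorInner3 (α s - α s₀) v = lorInner3 (α s) v - lorInner3 (α s₀) v := by
    simp only [lorInner3, Pi.sub_apply]; ring
  rw [hsplit, hαconst s hs, sub_self]
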